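/- The degree of cos(2π/11) over ℚ equals 5: [ℚ(cos(2π/11)) : ℚ] = 5; consequently cos(2π/11) does not lie in the top field of any (2,3)-tower of subfields of ℝ. -/

import Mathlib

/-!
With `ζ = exp (2πi/n)` and `c = cos (2π/n)` we have `ζ + ζ⁻¹ = 2c`, so `ζ` is a root of
`X² - 2cX + 1` over `ℚ(c)`; as `ℚ(c) ⊆ ℝ` does not contain `ζ`, `[ℚ(ζ) : ℚ(c)] = 2` and
`[ℚ(c) : ℚ] = φ(n)/2`, which is `5` for `n = 11`. The degree over `ℚ` of every field of a
(2,3)-tower is a product of `2`s and `3`s, so it cannot be divisible by `[ℚ(c) : ℚ] = 5`.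
-/

noncomputable section

/-- A (2,3)-tower: a finite chain `K 0 ⊆ K 1 ⊆ ⋯ ⊆ K n` of subfields of `ℝ`
(viewed as intermediate fields of `ℚ ⊆ ℝ`), with `K 0` the prime subfield
(the copy of `ℚ` in `ℝ`) and each relative degree `[K (i+1) : K i]` equal to 2 or 3. -/
structure TwoThreeTower (n : ℕ) where
  K : Fin (n + 1) → IntermediateField ℚ ℝ
  bot : K 0 = ⊥
  le : ∀ i : Fin n, K i.castSucc ≤ K i.succ
  deg : ∀ i : Fin n,
    Module.finrank (K i.castSucc) (IntermediateField.extendScalars (le i)) = 2 ∨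
    Module.finrank (K i.castSucc) (IntermediateField.extendScalars (le i)) = 3

open Polynomial IntermediateField Module
open scoped Real

namespace IntermediateField

variable {F E : Type*} [Field F] [Field E] [Algebra F E]

theorem finrank_adjoin_simple_le_two_of_quadratic {z : E} (a b : F)
    (h : z ^ 2 + algebraMap F E a * z + algebraMap F E b = 0) : finrank F F⟮z⟯ ≤ 2 := by
  let p : F[X] := X ^ 2 + C a * X + C b
  have hp : p.Monic := by unfold p; monicity!
  have hpz : aeval z p = 0 := by simpa [p] using h
  rw [adjoin.finrank ⟨p, hp, hpz⟩]
  calc (minpoly F z).natDegree ≤ p.natDegree := natDegree_le_natDegree (minpoly.min F z hp hpz)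
    _ ≤ 2 := by unfold p; compute_degree

theorem adjoin_simple_le_of_add_inv_eq_two_mul [NeZero (2 : E)] {z c : E}
    (hc : z + z⁻¹ = 2 * c) : F⟮c⟯ ≤ F⟮z⟯ := by
  have hc' : c = (z + z⁻¹) / 2 := by rw [hc]; field_simp
  rw [adjoin_simple_le_iff, hc']
  have hz := mem_adjoin_simple_self F z
  exact div_mem (add_mem hz (inv_mem hz)) (by simp)

theorem relfinrank_adjoin_simple_le_two [NeZero (2 : E)] {z c : E}
    (hz : z ≠ 0) (hc : z + z⁻¹ = 2 * c) : relfinrank F⟮c⟯ F⟮z⟯ ≤ 2 := by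
  rw [relfinrank_eq_finrank_of_le (adjoin_simple_le_of_add_inv_eq_two_mul hc),
    extendScalars_adjoin]
  refine finrank_adjoin_simple_le_two_of_quadratic (-2 * ⟨c, mem_adjoin_simple_self F c⟩) 1 ?_
  simp only [map_mul, map_neg, map_ofNat, map_one, algebraMap_apply]
  linear_combination z * hc - mul_inv_cancel₀ hz

theorem finrank_adjoin_simple_map {K : Type*} [Field K] [Algebra F K]
    (f : E →ₐ[F] K) (x : E) : finrank F F⟮f x⟯ = finrank F F⟮x⟯ := by
  rw [← Set.image_singleton, ← adjoin_map]
  exact (equivMap F⟮x⟯ f).toLinearEquiv.finrank_eq.symm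

end IntermediateField

namespace Complex

theorem exp_ofReal_mul_I_add_inv (x : ℝ) :
    exp (x * I) + (exp (x * I))⁻¹ = 2 * (Real.cos x : ℂ) := by
  rw [← exp_neg, ofReal_cos, two_cos, neg_mul]

theorem notMem_adjoin_ofReal_of_im_ne_zero {z : ℂ} (hz : z.im ≠ 0) (x : ℝ) :
    z ∉ ℚ⟮(x : ℂ)⟯ := by
  let f : ℝ →ₐ[ℚ] ℂ := ofRealAm.restrictScalars ℚ
  have hreal : ℚ⟮(x : ℂ)⟯ ≤ f.fieldRange := adjoin_simple_le_iff.2 ⟨x, rfl⟩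
  rintro hmem
  obtain ⟨r, rfl⟩ := hreal hmem
  exact hz (ofReal_im r)

end Complex

theorem two_mul_finrank_adjoin_cos_two_pi_div {n : ℕ} (hn : 3 ≤ n) :
    2 * finrank ℚ ℚ⟮Real.cos (2 * π / n)⟯ = n.totient := by
  set θ : ℝ := 2 * π / n
  set ζ : ℂ := Complex.exp (θ * Complex.I)
  have hζ : IsPrimitiveRoot ζ n := by
    convert Complex.isPrimitiveRoot_exp n (by omega) using 2
    push_cast [θ]; ring
  have hζ_im : ζ.im ≠ 0 := by
    have hn' : (3 : ℝ) ≤ n := by exact_mod_cast hn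
    rw [Complex.exp_ofReal_mul_I_im]
    refine (Real.sin_pos_of_pos_of_lt_pi (by positivity) ?_).ne'
    rw [div_lt_iff₀ (by positivity)]
    nlinarith [Real.pi_pos]
  have hsum := Complex.exp_ofReal_mul_I_add_inv θ
  have hL : finrank ℚ ℚ⟮ζ⟯ = n.totient := by
    rw [adjoin.finrank (hζ.isIntegral (by omega)).tower_top,
      ← cyclotomic_eq_minpoly_rat hζ (by omega), natDegree_cyclotomic]
  have hmul := finrank_bot_mul_relfinrank (adjoin_simple_le_of_add_inv_eq_two_mul (F := ℚ) hsum)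
  have hrel : relfinrank ℚ⟮(Real.cos θ : ℂ)⟯ ℚ⟮ζ⟯ = 2 := by
    have h2 : relfinrank ℚ⟮(Real.cos θ : ℂ)⟯ ℚ⟮ζ⟯ ≤ 2 :=
      relfinrank_adjoin_simple_le_two (Complex.exp_ne_zero _) hsum
    have h1 : relfinrank ℚ⟮(Real.cos θ : ℂ)⟯ ℚ⟮ζ⟯ ≠ 1 := by
      rw [Ne, relfinrank_eq_one_iff, adjoin_simple_le_iff]
      exact Complex.notMem_adjoin_ofReal_of_im_ne_zero hζ_im _
    have h0 : relfinrank ℚ⟮(Real.cos θ : ℂ)⟯ ℚ⟮ζ⟯ ≠ 0 := by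
      intro h
      rw [h, mul_zero, hL] at hmul
      exact (Nat.totient_pos.2 (by omega)).ne hmul
    omega
  rw [← finrank_adjoin_simple_map (Complex.ofRealAm.restrictScalars ℚ), ← hL, ← hmul, hrel,
    mul_comm]
  rfl

namespace TwoThreeTower

variable {n p : ℕ} (T : TwoThreeTower n)

theorem not_dvd_finrank (hp : p.Prime) (hp2 : p ≠ 2) (hp3 : p ≠ 3) (i : Fin (n + 1)) :
    ¬ p ∣ finrank ℚ (T.K i) := by
  induction i using Fin.induction with
  | zero => rw [T.bot, IntermediateField.finrank_bot]; exact hp.not_dvd_one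
  | succ i ih =>
    rw [← finrank_bot_mul_relfinrank (T.le i), relfinrank_eq_finrank_of_le (T.le i),
      hp.dvd_mul, not_or]
    refine ⟨ih, ?_⟩
    rcases T.deg i with h | h <;> rw [h, Nat.prime_dvd_prime_iff_eq hp (by norm_num)] <;> assumption

theorem not_dvd_finrank_adjoin_of_mem (hp : p.Prime) (hp2 : p ≠ 2) (hp3 : p ≠ 3) {x : ℝ}
    (hx : x ∈ T.K (Fin.last n)) : ¬ p ∣ finrank ℚ ℚ⟮x⟯ := fun h ↦
  T.not_dvd_finrank hp hp2 hp3 (Fin.last n) <|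
    h.trans (Dvd.intro _ (finrank_bot_mul_relfinrank (adjoin_simple_le_iff.2 hx)))

end TwoThreeTower

/-- `[ℚ(cos (2π/11)) : ℚ] = 5`; consequently `cos (2π/11)` does not lie in the top
field of any (2,3)-tower of subfields of `ℝ`. -/
theorem cos_two_pi_div_eleven_degree_and_not_in_twoThreeTower
    (c : ℝ) (hc : c = Real.cos (2 * Real.pi / 11)) :
    Module.finrank ℚ (IntermediateField.adjoin ℚ ({c} : Set ℝ)) = 5 ∧
      ¬ ∃ (n : ℕ) (T : TwoThreeTower n), c ∈ T.K (Fin.last n) := by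
  have hdeg : finrank ℚ ℚ⟮c⟯ = 5 := by
    have h := two_mul_finrank_adjoin_cos_two_pi_div (n := 11) (by norm_num)
    rw [Nat.totient_prime (by norm_num), Nat.cast_ofNat, ← hc] at h
    omega
  refine ⟨hdeg, ?_⟩
  rintro ⟨n, T, hc_mem⟩
  exact T.not_dvd_finrank_adjoin_of_mem (p := 5) (by norm_num) (by norm_num) (by norm_num) hc_mem
    (hdeg ▸ dvd_rfl)
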